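/- Let V be a complex vector space of dimension 2m with m ≥ 2 and let j ∈ End(V) satisfy j∘j = −Id, with each of the eigenspaces ker(j − i·Id) and ker(j + i·Id) of dimension m. Then there exists a nonzero Bianchi tensor R on V satisfying D_j R = 4i·R, where (D_j R)(X,Y)Z = j(R(X,Y)Z) − R(jX,Y)Z − R(X,jY)Z − R(X,Y)(jZ); moreover every such R has vanishing Ricci contraction. (Thus the 4i-eigenvalue of D_j occurs on the space of Weyl tensors.) -/

import Mathlib

/-!
Linear forms `φ` with `φ ∘ j = -i φ` are pulled back from `ker (j + i)` along the retraction
`(1 + i j) / 2`, so there are two independent ones, `φ` and `ψ`; pick `w ≠ 0` with `j w = i w`.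
Then `R(X,Y)Z = (φ ∧ ψ)(X,Y) φ(Z) w` is a nonzero Bianchi tensor with `D_j R = 4i R`.

Conversely, tracing `D_j R = μ R` in the middle slot gives `r(jX,Y) + r(X,jY) = -μ r(X,Y)`
for the Ricci contraction `r`. Substituting `jX`, `jY` and using `j² = -1` yields
`r(jX,jY) = -r(X,Y)` and then `(μ² + 4) r = 0`, so `r = 0` for `μ = 4i`.
-/

open LinearMap Module

/-- The derivation action `D_j` of `j` on `End(V)`-valued bilinear maps:
`(D_j R)(X,Y)Z = j(R(X,Y)Z) − R(jX,Y)Z − R(X,jY)Z − R(X,Y)(jZ)`. -/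
noncomputable def DjTri {V : Type*} [AddCommGroup V] [Module ℂ V]
    (j : Module.End ℂ V) (R : V →ₗ[ℂ] V →ₗ[ℂ] Module.End ℂ V) :
    V →ₗ[ℂ] V →ₗ[ℂ] Module.End ℂ V :=
  R.compr₂ (LinearMap.llcomp ℂ V V V j)
    - R.compl₁₂ j LinearMap.id - R.compl₁₂ LinearMap.id j
    - R.compr₂ (LinearMap.lcomp ℂ V j)

/-- The Ricci contraction of a curvature-type tensor `R : V × V → End(V)` is the bilinear
form `r(X,Y) = Tr(Z ↦ R(X,Z)Y)`. -/
noncomputable def ricci {V : Type*} [AddCommGroup V] [Module ℂ V]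
    (R : V →ₗ[ℂ] V →ₗ[ℂ] Module.End ℂ V) (X Y : V) : ℂ :=
  LinearMap.trace ℂ V ((LinearMap.applyₗ Y).comp (R X))

section

open Complex

variable {V : Type*} [AddCommGroup V] [Module ℂ V]

@[simp]
theorem DjTri_apply (j : Module.End ℂ V) (R : V →ₗ[ℂ] V →ₗ[ℂ] Module.End ℂ V) (X Y Z : V) :
    DjTri j R X Y Z = j (R X Y Z) - R (j X) Y Z - R X (j Y) Z - R X Y (j Z) := by
  simp [DjTri]

section WedgeTensor

noncomputable def wedgeTensor (φ ψ : V →ₗ[ℂ] ℂ) (w : V) : V →ₗ[ℂ] V →ₗ[ℂ] Module.End ℂ V :=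
  ((lsmul ℂ ℂ).compl₁₂ φ ψ - (lsmul ℂ ℂ).compl₁₂ ψ φ).compr₂
    (toSpanSingleton ℂ _ (φ.smulRight w))

variable (φ ψ : V →ₗ[ℂ] ℂ) (w : V)

theorem wedgeTensor_apply (X Y Z : V) :
    wedgeTensor φ ψ w X Y Z = ((φ X * ψ Y - ψ X * φ Y) * φ Z) • w := by
  simp [wedgeTensor, smul_smul]

theorem wedgeTensor_apply_self (X : V) : wedgeTensor φ ψ w X X = 0 := by
  ext Z
  simp [wedgeTensor_apply, mul_comm]

theorem wedgeTensor_cyclic (X Y Z : V) :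
    wedgeTensor φ ψ w X Y Z + wedgeTensor φ ψ w Y Z X + wedgeTensor φ ψ w Z X Y = 0 := by
  simp only [wedgeTensor_apply, ← add_smul]
  exact smul_eq_zero_of_left (by ring) w

/-- Each of the three arguments contributes `i` and the value contributes `i`. -/
theorem DjTri_wedgeTensor {j : Module.End ℂ V} (hφ : ∀ X, φ (j X) = -I * φ X)
    (hψ : ∀ X, ψ (j X) = -I * ψ X) (hw : j w = I • w) :
    DjTri j (wedgeTensor φ ψ w) = (4 * I) • wedgeTensor φ ψ w := by
  ext X Y Z
  simp only [DjTri_apply, wedgeTensor_apply, map_smul, hφ, hψ, hw, LinearMap.smul_apply]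
  match_scalars
  ring

end WedgeTensor

section Eigenspaces

variable {j : Module.End ℂ V}

/-- The retraction is `(1 + i j) / 2`. -/
theorem exists_retraction_ker_add_I (hj : j * j = -1) :
    ∃ p : V →ₗ[ℂ] ker (j + I • LinearMap.id),
      (∀ v, p (j v) = -I • p v) ∧ ∀ v : ker (j + I • LinearMap.id), p v = v := by
  have hjj : ∀ v, j (j v) = -v := fun v => by simpa using congr($hj v)
  refine ⟨codRestrict _ ((2 : ℂ)⁻¹ • (1 + I • j)) fun v => ?_, fun v => ?_, fun ⟨v, hv⟩ => ?_⟩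
  · simp only [mem_ker, LinearMap.add_apply, LinearMap.smul_apply, Module.End.one_apply,
      id_apply, map_smul, map_add, hjj]
    match_scalars
    · linear_combination 2⁻¹ * I_mul_I
    · ring
  · ext
    simp only [codRestrict_apply, LinearMap.smul_apply, LinearMap.add_apply,
      Module.End.one_apply, hjj, SetLike.val_smul]
    match_scalars
    · linear_combination 2⁻¹ * I_mul_I
    · ring
  · have hjv : j v = -(I • v) := eq_neg_of_add_eq_zero_left (by simpa using hv)
    ext
    simp only [codRestrict_apply, LinearMap.smul_apply, LinearMap.add_apply,
      Module.End.one_apply, hjv]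
    match_scalars
    linear_combination -2⁻¹ * I_mul_I

theorem exists_dual_pair_of_two_le_finrank_ker_add_I (hj : j * j = -1)
    (hK : 2 ≤ finrank ℂ (ker (j + I • LinearMap.id))) :
    ∃ (φ ψ : V →ₗ[ℂ] ℂ) (u v : V), (∀ X, φ (j X) = -I * φ X) ∧ (∀ X, ψ (j X) = -I * ψ X) ∧
      φ u = 1 ∧ φ v = 0 ∧ ψ u = 0 ∧ ψ v = 1 := by
  obtain ⟨p, hpj, hp⟩ := exists_retraction_ker_add_I hj
  have : Module.Finite ℂ (ker (j + I • LinearMap.id)) := Module.finite_of_finrank_pos (by omega)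
  let b := finBasisOfFinrankEq ℂ (ker (j + I • LinearMap.id)) rfl
  let i₀ : Fin (finrank ℂ (ker (j + I • LinearMap.id))) := ⟨0, by omega⟩
  let i₁ : Fin (finrank ℂ (ker (j + I • LinearMap.id))) := ⟨1, by omega⟩
  have hi : i₀ ≠ i₁ := by simp [i₀, i₁, Fin.ext_iff]
  refine ⟨b.coord i₀ ∘ₗ p, b.coord i₁ ∘ₗ p, b i₀, b i₁,
    fun X => ?_, fun X => ?_, ?_, ?_, ?_, ?_⟩ <;> simp [hpj, hp, hi, hi.symm]

theorem exists_ne_zero_apply_eq_I_smul (hK : 0 < finrank ℂ (ker (j - I • LinearMap.id))) :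
    ∃ w : V, w ≠ 0 ∧ j w = I • w := by
  obtain ⟨w, hw, hw0⟩ := Submodule.exists_mem_ne_zero_of_ne_bot
    (p := ker (j - I • LinearMap.id)) fun h => by
      rw [h, finrank_bot] at hK; exact hK.false
  exact ⟨w, hw0, sub_eq_zero.mp (by simpa using hw)⟩

theorem exists_bianchi_DjTri_eq_four_I_smul (hj : j * j = -1)
    (hminus : 2 ≤ finrank ℂ (ker (j + I • LinearMap.id)))
    (hplus : 0 < finrank ℂ (ker (j - I • LinearMap.id))) :
    ∃ R : V →ₗ[ℂ] V →ₗ[ℂ] Module.End ℂ V, R ≠ 0 ∧ (∀ X, R X X = 0) ∧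
      (∀ X Y Z, R X Y Z + R Y Z X + R Z X Y = 0) ∧ DjTri j R = (4 * I) • R := by
  obtain ⟨φ, ψ, u, v, hφ, hψ, hφu, hφv, hψu, hψv⟩ :=
    exists_dual_pair_of_two_le_finrank_ker_add_I hj hminus
  obtain ⟨w, hw0, hw⟩ := exists_ne_zero_apply_eq_I_smul hplus
  refine ⟨wedgeTensor φ ψ w, fun h => hw0 ?_, wedgeTensor_apply_self φ ψ w,
    wedgeTensor_cyclic φ ψ w, DjTri_wedgeTensor φ ψ w hφ hψ hw⟩
  simpa [wedgeTensor_apply, hφu, hφv, hψu, hψv] using congr($h u v u)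

end Eigenspaces

section Ricci

variable {j : Module.End ℂ V} {R : V →ₗ[ℂ] V →ₗ[ℂ] Module.End ℂ V} {μ : ℂ}

/-- The `j`-terms on the value and on the middle argument cancel since `Tr (j A) = Tr (A j)`. -/
theorem ricci_apply_j_add_ricci_j_apply (hD : DjTri j R = μ • R) (X Y : V) :
    ricci R (j X) Y + ricci R X (j Y) = -μ * ricci R X Y := by
  let A := applyₗ Y ∘ₗ R X
  have hop : j * A - applyₗ Y ∘ₗ R (j X) - A * j - applyₗ (j Y) ∘ₗ R X = μ • A := by
    ext Z
    simpa [A] using congr($hD X Z Y)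
  have htr := congr(trace ℂ V $hop)
  simp only [map_sub, map_smul, trace_mul_comm ℂ j A, smul_eq_mul] at htr
  simp only [ricci]
  linear_combination -htr

theorem ricci_eq_zero_of_DjTri_eq_smul (hj : j * j = -1) (hμ : μ ≠ 0) (hμ' : μ ^ 2 + 4 ≠ 0)
    (hD : DjTri j R = μ • R) (X Y : V) : ricci R X Y = 0 := by
  have hjj : ∀ v, j (j v) = -v := fun v => by simpa using congr($hj v)
  have hneg : ∀ X Y : V, ricci R (-X) Y = -ricci R X Y ∧ ricci R X (-Y) = -ricci R X Y :=
    fun X Y => by simp [ricci]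
  have e₁ := ricci_apply_j_add_ricci_j_apply hD X Y
  have e₂ := ricci_apply_j_add_ricci_j_apply hD (j X) Y
  have e₃ := ricci_apply_j_add_ricci_j_apply hD X (j Y)
  have e₄ := ricci_apply_j_add_ricci_j_apply hD (j X) (j Y)
  simp only [hjj, (hneg _ _).1, (hneg _ _).2] at e₂ e₃ e₄
  have hsum : ricci R (j X) (j Y) = -ricci R X Y :=
    mul_left_cancel₀ hμ (by linear_combination e₄ + e₁)
  refine (mul_eq_zero.mp ?_).resolve_left hμ'
  linear_combination -(e₂ + e₃) + 2 * hsum + μ * e₁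

end Ricci

end

theorem weyl_four_i_eigenvalue_general {V : Type*} [AddCommGroup V] [Module ℂ V]
    (m : ℕ) (hm : 2 ≤ m)
    (j : Module.End ℂ V) (hj : j * j = -1)
    (hplus : Module.finrank ℂ (LinearMap.ker (j - Complex.I • LinearMap.id)) = m)
    (hminus : Module.finrank ℂ (LinearMap.ker (j + Complex.I • LinearMap.id)) = m) :
    (∃ R : V →ₗ[ℂ] V →ₗ[ℂ] Module.End ℂ V,
        R ≠ 0 ∧
        (∀ X : V, R X X = 0) ∧
        (∀ X Y Z : V, R X Y Z + R Y Z X + R Z X Y = 0) ∧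
        DjTri j R = (4 * Complex.I) • R) ∧
    (∀ R : V →ₗ[ℂ] V →ₗ[ℂ] Module.End ℂ V,
        (∀ X : V, R X X = 0) →
        (∀ X Y Z : V, R X Y Z + R Y Z X + R Z X Y = 0) →
        DjTri j R = (4 * Complex.I) • R →
        ∀ X Y : V, ricci R X Y = 0) := by
  refine ⟨exists_bianchi_DjTri_eq_four_I_smul hj (by omega) (by omega),
    fun R _ _ hD => ricci_eq_zero_of_DjTri_eq_smul hj ?_ ?_ hD⟩
  · simp [Complex.I_ne_zero]
  · norm_num [mul_pow]

/-- Let `dim V = 2m`, `m ≥ 2`, and `j² = −Id` with both eigenspaces `ker(j ∓ i·Id)` of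
dimension `m`. Then there is a nonzero Bianchi tensor `R` with `D_j R = 4i·R`, and every
such `R` has vanishing Ricci contraction: the `4i`-eigenvalue of `D_j` occurs on the
space of Weyl tensors. -/
theorem weyl_four_i_eigenvalue {V : Type*} [AddCommGroup V] [Module ℂ V]
    [FiniteDimensional ℂ V]
    (m : ℕ) (hm : 2 ≤ m) (hdim : Module.finrank ℂ V = 2 * m)
    (j : Module.End ℂ V) (hj : j * j = -1)
    (hplus : Module.finrank ℂ (LinearMap.ker (j - Complex.I • LinearMap.id)) = m)
    (hminus : Module.finrank ℂ (LinearMap.ker (j + Complex.I • LinearMap.id)) = m) :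
    (∃ R : V →ₗ[ℂ] V →ₗ[ℂ] Module.End ℂ V,
        R ≠ 0 ∧
        (∀ X : V, R X X = 0) ∧
        (∀ X Y Z : V, R X Y Z + R Y Z X + R Z X Y = 0) ∧
        DjTri j R = (4 * Complex.I) • R) ∧
    (∀ R : V →ₗ[ℂ] V →ₗ[ℂ] Module.End ℂ V,
        (∀ X : V, R X X = 0) →
        (∀ X Y Z : V, R X Y Z + R Y Z X + R Z X Y = 0) →
        DjTri j R = (4 * Complex.I) • R →
        ∀ X Y : V, ricci R X Y = 0) :=
  weyl_four_i_eigenvalue_general m hm j hj hplus hminus
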